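/- arXiv:1603.05801 — 2 statements merged into one kernel-verified Lean document; each statement's English description precedes it below -/
import Mathlib

section
/- Let m_nd be a G-antisymmetric real 4×4 matrix (m_ndᵀG + G m_nd = 0), let d₁, d₂, d₃ ≥ 0, let m_d = diag(d₁+d₂+d₃, d₁−d₂−d₃, −d₁+d₂−d₃, −d₁−d₂+d₃) be the type-I canonical depolarizing differential Mueller matrix, and let s : ℝ → ℝ⁴ be a differentiable curve satisfying s′(z) = (m_nd + m_d) · s(z) and such that s(z) is an admissible Stokes vector for every z. Then the Minkowski metric z ↦ s(z)ᵀ G s(z) is nondecreasing on ℝ; equivalently, the Shannon entropy of the beam cannot decrease under such a depolarizing propagation. -/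
/-!
Along the flow, `(sᵀGs)' = 2 sᵀG m_nd s + 2 sᵀG m_d s`. The first term vanishes because
`G m_nd` is antisymmetric. The second is `Σ dᵢ (sᵀGs + 2 (sⱼ² + sₖ²))`, summed over
`{i, j, k} = {1, 2, 3}`, which is nonnegative as soon as `sᵀGs ≥ 0`.
-/

open Matrix

noncomputable def G : Matrix (Fin 4) (Fin 4) ℝ := Matrix.diagonal ![1, -1, -1, -1]

def StokesAdmissible (s : Fin 4 → ℝ) : Prop := 0 ≤ s 0 ∧ 0 ≤ s ⬝ᵥ G.mulVec s

section
variable {𝕜 n : Type*} [NontriviallyNormedField 𝕜] [Fintype n] {u v : 𝕜 → n → 𝕜}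
  {u' v' : n → 𝕜} {x : 𝕜}

theorem HasDerivAt.dotProduct (hu : HasDerivAt u u' x) (hv : HasDerivAt v v' x) :
    HasDerivAt (fun t => u t ⬝ᵥ v t) (u' ⬝ᵥ v x + u x ⬝ᵥ v') x := by
  have hprod (i : n) : HasDerivAt (fun t => u t i * v t i) (u' i * v x i + u x i * v' i) x :=
    (hasDerivAt_pi.mp hu i).mul (hasDerivAt_pi.mp hv i)
  simpa only [_root_.dotProduct, ← Finset.sum_add_distrib] using
    HasDerivAt.fun_sum (u := Finset.univ) fun i _ => hprod i

theorem HasDerivAt.matrix_mulVec (A : Matrix n n 𝕜) (hv : HasDerivAt v v' x) :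
    HasDerivAt (fun t => A *ᵥ v t) (A *ᵥ v') x :=
  hasDerivAt_pi.mpr fun i => by
    simpa only [mulVec, zero_dotProduct, zero_add] using (hasDerivAt_const x (A i)).dotProduct hv

theorem HasDerivAt.dotProduct_mulVec_self {A : Matrix n n 𝕜} (hA : Aᵀ = A)
    (hv : HasDerivAt v v' x) :
    HasDerivAt (fun t => v t ⬝ᵥ A *ᵥ v t) (2 * (v x ⬝ᵥ A *ᵥ v')) x := by
  convert hv.dotProduct (hv.matrix_mulVec A) using 1
  rw [dotProduct_comm, dotProduct_mulVec, ← mulVec_transpose, hA, two_mul]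
end

theorem dotProduct_mulVec_self_eq_zero {R n : Type*} [CommRing R] [IsAddTorsionFree R] [Fintype n]
    {A : Matrix n n R} (hA : Aᵀ = -A) (v : n → R) : v ⬝ᵥ A *ᵥ v = 0 := by
  refine self_eq_neg.mp ?_
  calc v ⬝ᵥ A *ᵥ v = v ⬝ᵥ Aᵀ *ᵥ v := by
        rw [dotProduct_mulVec, mulVec_transpose, dotProduct_comm]
    _ = -(v ⬝ᵥ A *ᵥ v) := by rw [hA, neg_mulVec, dotProduct_neg]

theorem G_transpose : Gᵀ = G := diagonal_transpose _

theorem dotProduct_G_mulVec (v w : Fin 4 → ℝ) :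
    v ⬝ᵥ G *ᵥ w = v 0 * w 0 - v 1 * w 1 - v 2 * w 2 - v 3 * w 3 := by
  simp only [dotProduct, G, mulVec_diagonal, Fin.sum_univ_four, Fin.isValue, cons_val_zero,
    cons_val_one, cons_val]
  ring

theorem dotProduct_G_mulVec_self_eq_zero {m : Matrix (Fin 4) (Fin 4) ℝ}
    (hm : mᵀ * G + G * m = 0) (v : Fin 4 → ℝ) : v ⬝ᵥ G *ᵥ (m *ᵥ v) = 0 := by
  rw [mulVec_mulVec]
  refine dotProduct_mulVec_self_eq_zero ?_ v
  rw [transpose_mul, G_transpose, eq_neg_iff_add_eq_zero, hm]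

noncomputable def canonicalDepolarizer (d₁ d₂ d₃ : ℝ) : Matrix (Fin 4) (Fin 4) ℝ :=
  diagonal ![d₁ + d₂ + d₃, d₁ - d₂ - d₃, -d₁ + d₂ - d₃, -d₁ - d₂ + d₃]

theorem dotProduct_G_mulVec_canonicalDepolarizer_nonneg {d₁ d₂ d₃ : ℝ} (h₁ : 0 ≤ d₁)
    (h₂ : 0 ≤ d₂) (h₃ : 0 ≤ d₃) {v : Fin 4 → ℝ} (hv : 0 ≤ v ⬝ᵥ G *ᵥ v) :
    0 ≤ v ⬝ᵥ G *ᵥ (canonicalDepolarizer d₁ d₂ d₃ *ᵥ v) := by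
  set q := v ⬝ᵥ G *ᵥ v
  have hsplit : v ⬝ᵥ G *ᵥ (canonicalDepolarizer d₁ d₂ d₃ *ᵥ v) =
      d₁ * (q + 2 * (v 2 ^ 2 + v 3 ^ 2)) + d₂ * (q + 2 * (v 1 ^ 2 + v 3 ^ 2)) +
        d₃ * (q + 2 * (v 1 ^ 2 + v 2 ^ 2)) := by
    simp only [q, dotProduct_G_mulVec, canonicalDepolarizer, mulVec_diagonal, Fin.isValue,
      cons_val_zero, cons_val_one, cons_val]
    ring
  rw [hsplit]
  positivity

/-- Under propagation governed by m = m_nd + m_d, with m_nd G-antisymmetric and m_d the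
type-I canonical depolarizing differential Mueller matrix with nonnegative parameters,
the Minkowski metric of an admissible Stokes curve is nondecreasing (the Shannon entropy
of the beam cannot decrease). -/
theorem minkowski_monotone_of_depolarizing_propagation
    (m_nd : Matrix (Fin 4) (Fin 4) ℝ) (hnd : m_ndᵀ * G + G * m_nd = 0)
    (d₁ d₂ d₃ : ℝ) (h₁ : 0 ≤ d₁) (h₂ : 0 ≤ d₂) (h₃ : 0 ≤ d₃)
    (m_d : Matrix (Fin 4) (Fin 4) ℝ)
    (hd : m_d = Matrix.diagonal ![d₁ + d₂ + d₃, d₁ - d₂ - d₃, -d₁ + d₂ - d₃, -d₁ - d₂ + d₃])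
    (s : ℝ → Fin 4 → ℝ)
    (hs : ∀ z : ℝ, HasDerivAt s ((m_nd + m_d).mulVec (s z)) z)
    (hadm : ∀ z : ℝ, StokesAdmissible (s z)) :
    Monotone fun z => s z ⬝ᵥ G.mulVec (s z) := by
  change m_d = canonicalDepolarizer d₁ d₂ d₃ at hd
  have hderiv (z : ℝ) := (hs z).dotProduct_mulVec_self G_transpose
  refine monotone_of_deriv_nonneg (fun z => (hderiv z).differentiableAt) fun z => ?_
  rw [(hderiv z).deriv, add_mulVec, mulVec_add, dotProduct_add,
    dotProduct_G_mulVec_self_eq_zero hnd, zero_add, hd]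
  exact mul_nonneg zero_le_two
    (dotProduct_G_mulVec_canonicalDepolarizer_nonneg h₁ h₂ h₃ (hadm z).2)
end

section
/- Let d₁, d₂, d₃ ≥ 0 and let m = diag(d₁+d₂+d₃, d₁−d₂−d₃, −d₁+d₂−d₃, −d₁−d₂+d₃) be the type-I canonical depolarizing differential Mueller matrix. If sᵀ(mᵀG + Gm)s = 0 for every admissible Stokes vector s ∈ ℝ⁴, then d₁ = d₂ = d₃ = 0, i.e. m = 0 and the transformation is non-depolarizing; thus the derivative of the Minkowski metric vanishes identically only for non-depolarizing differential Mueller matrices. -/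
open Matrix

theorem dotProduct_diagonal_mulVec_self {n R : Type*} [Fintype n] [DecidableEq n] [CommRing R]
    (a s : n → R) : s ⬝ᵥ diagonal a *ᵥ s = ∑ i, a i * s i ^ 2 := by
  simp only [dotProduct, mulVec_diagonal]
  exact Finset.sum_congr rfl fun i _ => by ring

theorem diagonal_transpose_mul_add_mul_diagonal {n R : Type*} [Fintype n] [DecidableEq n]
    [CommRing R] (a g : n → R) :
    (diagonal a)ᵀ * diagonal g + diagonal g * diagonal a = diagonal fun i => 2 * g i * a i := by
  rw [diagonal_transpose, diagonal_mul_diagonal, diagonal_mul_diagonal, diagonal_add]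
  congr 1
  funext i
  ring

theorem stokesAdmissible_iff (s : Fin 4 → ℝ) :
    StokesAdmissible s ↔ 0 ≤ s 0 ∧ s 1 ^ 2 + s 2 ^ 2 + s 3 ^ 2 ≤ s 0 ^ 2 := by
  rw [StokesAdmissible, G, dotProduct_diagonal_mulVec_self, Fin.sum_univ_four]
  simp only [Matrix.cons_val]
  constructor <;> rintro ⟨h0, h⟩ <;> exact ⟨h0, by linarith⟩

theorem minkowski_derivative_diagonal (d s : Fin 4 → ℝ) :
    s ⬝ᵥ ((diagonal d)ᵀ * G + G * diagonal d) *ᵥ s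
      = 2 * (d 0 * s 0 ^ 2 - d 1 * s 1 ^ 2 - d 2 * s 2 ^ 2 - d 3 * s 3 ^ 2) := by
  rw [G, diagonal_transpose_mul_add_mul_diagonal, dotProduct_diagonal_mulVec_self,
    Fin.sum_univ_four]
  simp only [Matrix.cons_val]
  ring

/-- Testing on the unpolarized state `(1,0,0,0)` kills `d 0`; testing on the totally polarized
states `(1,1,0,0)`, `(1,0,1,0)`, `(1,0,0,1)` then gives `d k = d 0`. -/
theorem diagonal_eq_zero_of_minkowski_derivative_eq_zero (d : Fin 4 → ℝ)
    (h : ∀ s, StokesAdmissible s → s ⬝ᵥ ((diagonal d)ᵀ * G + G * diagonal d) *ᵥ s = 0) :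
    d = 0 := by
  have form_eq_zero : ∀ s, StokesAdmissible s →
      d 0 * s 0 ^ 2 - d 1 * s 1 ^ 2 - d 2 * s 2 ^ 2 - d 3 * s 3 ^ 2 = 0 := fun s hs => by
    have := h s hs
    rw [minkowski_derivative_diagonal] at this
    linarith
  have h0 := form_eq_zero ![1, 0, 0, 0] (by simp [stokesAdmissible_iff])
  have h1 := form_eq_zero ![1, 1, 0, 0] (by simp [stokesAdmissible_iff])
  have h2 := form_eq_zero ![1, 0, 1, 0] (by simp [stokesAdmissible_iff])
  have h3 := form_eq_zero ![1, 0, 0, 1] (by simp [stokesAdmissible_iff])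
  simp only [Fin.isValue, Matrix.cons_val] at h0 h1 h2 h3
  norm_num at h0 h1 h2 h3
  funext i
  fin_cases i <;> simp only [Fin.zero_eta, Fin.mk_one, Fin.reduceFinMk, Pi.zero_apply] <;> linarith

theorem typeI_zero_quadratic_form_iff_nondepolarizing_general
    (d₁ d₂ d₃ : ℝ)
    (m : Matrix (Fin 4) (Fin 4) ℝ)
    (hm : m = Matrix.diagonal ![d₁ + d₂ + d₃, d₁ - d₂ - d₃, -d₁ + d₂ - d₃, -d₁ - d₂ + d₃])
    (hzero : ∀ s : Fin 4 → ℝ, StokesAdmissible s → s ⬝ᵥ (mᵀ * G + G * m).mulVec s = 0) :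
    d₁ = 0 ∧ d₂ = 0 ∧ d₃ = 0 ∧ m = 0 := by
  subst hm
  have hd := diagonal_eq_zero_of_minkowski_derivative_eq_zero _ hzero
  have e0 := congrFun hd 0
  have e1 := congrFun hd 1
  have e2 := congrFun hd 2
  have e3 := congrFun hd 3
  simp only [Matrix.cons_val, Pi.zero_apply] at e0 e1 e2 e3
  exact ⟨by linarith, by linarith, by linarith, hd ▸ diagonal_zero⟩

/-- If the derivative of the Minkowski metric vanishes for every admissible Stokes vector
under the type-I canonical depolarizing differential Mueller matrix, then all the
canonical depolarization parameters vanish, i.e. the transformation is non-depolarizing. -/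
theorem typeI_zero_quadratic_form_iff_nondepolarizing
    (d₁ d₂ d₃ : ℝ) (h₁ : 0 ≤ d₁) (h₂ : 0 ≤ d₂) (h₃ : 0 ≤ d₃)
    (m : Matrix (Fin 4) (Fin 4) ℝ)
    (hm : m = Matrix.diagonal ![d₁ + d₂ + d₃, d₁ - d₂ - d₃, -d₁ + d₂ - d₃, -d₁ - d₂ + d₃])
    (hzero : ∀ s : Fin 4 → ℝ, StokesAdmissible s → s ⬝ᵥ (mᵀ * G + G * m).mulVec s = 0) :
    d₁ = 0 ∧ d₂ = 0 ∧ d₃ = 0 ∧ m = 0 :=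
  typeI_zero_quadratic_form_iff_nondepolarizing_general d₁ d₂ d₃ m hm hzero
end
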